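/- Let c ≥ 1, β > 0, and consider φ(δ) = sup_{p ≥ c} δ^{1/p} · p^{−β} for δ ∈ (0, e^{−1}). Then as δ → 0+, φ(δ) ∼ β^{β} e^{−β} |log δ|^{−β} up to the stated constant: φ(δ) ∼ (β/e)^{β} |log δ|^{−β}, with the supremum attained asymptotically at p = |log δ|/β. -/

import Mathlib

/-!
Write `L = |log δ|`. Then `log (δ ^ (1/p) * p ^ (-β)) = -L/p - β log p`, and `log x ≤ x - 1` at
`x = L/(βp)` bounds this by `β log (β/e) - β log L`, with equality at `p = L/β`. As soon as
`L ≥ βc` this maximiser lies in `[c, ∞)`, so `φ(δ)` equals `(β/e)^β L^(-β)` exactly and the ratio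
is eventually `1`.
-/

open Filter Real

noncomputable def fundamentalFunction (c β δ : ℝ) : ℝ :=
  ⨆ p : Set.Ici c, δ ^ (1 / (p : ℝ)) * (p : ℝ) ^ (-β)

section

variable {β δ : ℝ}

lemma log_rpow_one_div_mul_rpow_neg (hδ : 0 < δ) {p : ℝ} (hp : 0 < p) :
    log (δ ^ (1 / p) * p ^ (-β)) = log δ / p - β * log p := by
  rw [log_mul (by positivity) (by positivity), log_rpow hδ, log_rpow hp]
  ring

lemma log_div_exp_one_rpow_mul_rpow_neg (hβ : 0 < β) {L : ℝ} (hL : 0 < L) :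
    log ((β / exp 1) ^ β * L ^ (-β)) = β * (log β - 1) - β * log L := by
  rw [log_mul (by positivity) (by positivity), log_rpow (by positivity), log_rpow hL,
    log_div hβ.ne' (exp_pos 1).ne', log_exp]
  ring

lemma rpow_one_div_mul_rpow_neg_le (hβ : 0 < β) (hδ₀ : 0 < δ) (hδ₁ : δ < 1) {p : ℝ}
    (hp : 0 < p) :
    δ ^ (1 / p) * p ^ (-β) ≤ (β / exp 1) ^ β * |log δ| ^ (-β) := by
  have hlog := log_neg hδ₀ hδ₁
  have hL : 0 < -log δ := by linarith
  rw [abs_of_neg hlog,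
    ← log_le_log_iff (by positivity) (mul_pos (by positivity) (rpow_pos_of_pos hL _)),
    log_rpow_one_div_mul_rpow_neg hδ₀ hp, log_div_exp_one_rpow_mul_rpow_neg hβ hL]
  have key := log_le_sub_one_of_pos (div_pos hL (mul_pos hβ hp))
  rw [log_div hL.ne' (by positivity), log_mul hβ.ne' hp.ne'] at key
  have hβp : β * (-log δ / (β * p)) = -(log δ / p) := by field_simp
  nlinarith

lemma rpow_one_div_mul_rpow_neg_eq (hβ : 0 < β) (hδ₀ : 0 < δ) (hδ₁ : δ < 1) :
    δ ^ (1 / (|log δ| / β)) * (|log δ| / β) ^ (-β) = (β / exp 1) ^ β * |log δ| ^ (-β) := by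
  have hlog := log_neg hδ₀ hδ₁
  have hL : 0 < -log δ := by linarith
  rw [abs_of_neg hlog]
  refine log_injOn_pos (Set.mem_Ioi.mpr (by positivity))
    (Set.mem_Ioi.mpr (mul_pos (by positivity) (rpow_pos_of_pos hL _))) ?_
  rw [log_rpow_one_div_mul_rpow_neg hδ₀ (by positivity), log_div_exp_one_rpow_mul_rpow_neg hβ hL,
    log_div hL.ne' hβ.ne']
  field_simp [hlog.ne]
  ring

lemma fundamentalFunction_eq {c : ℝ} (hc : 0 < c) (hβ : 0 < β) (hδ₀ : 0 < δ) (hδ₁ : δ < 1)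
    (hδ : β * c ≤ |log δ|) :
    fundamentalFunction c β δ = (β / exp 1) ^ β * |log δ| ^ (-β) := by
  have hle (p : Set.Ici c) :
      δ ^ (1 / (p : ℝ)) * (p : ℝ) ^ (-β) ≤ (β / exp 1) ^ β * |log δ| ^ (-β) :=
    rpow_one_div_mul_rpow_neg_le hβ hδ₀ hδ₁ (hc.trans_le p.2)
  have hmax : c ≤ |log δ| / β := (le_div_iff₀ hβ).mpr (by linarith)
  exact le_antisymm (ciSup_le hle) (le_ciSup_of_le ⟨_, Set.forall_mem_range.mpr hle⟩
    ⟨|log δ| / β, hmax⟩ (rpow_one_div_mul_rpow_neg_eq hβ hδ₀ hδ₁).ge)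

end

/-- asymptotics of the fundamental function
`φ(δ) = sup_{p ≥ c} δ^{1/p} p^{−β} ∼ (β/e)^β |log δ|^{−β}` as `δ → 0⁺`. -/
theorem fundamental_function_asymptotics_infinite_b (c β : ℝ)
    (hc : 1 ≤ c) (hβ : 0 < β) :
    Tendsto (fun δ : ℝ =>
        (⨆ p : Set.Ici c, δ ^ (1 / (p : ℝ)) * (p : ℝ) ^ (-β)) /
          ((β / Real.exp 1) ^ β * |Real.log δ| ^ (-β)))
      (nhdsWithin 0 (Set.Ioo 0 (Real.exp (-1)))) (nhds 1) := by
  have hlarge : ∀ᶠ δ in nhdsWithin 0 (Set.Ioi 0), β * c ≤ |log δ| :=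
    (tendsto_abs_atBot_atTop.comp tendsto_log_nhdsGT_zero).eventually_ge_atTop _
  refine tendsto_const_nhds.congr' ?_
  filter_upwards [nhdsWithin_mono _ Set.Ioo_subset_Ioi_self hlarge, self_mem_nhdsWithin]
    with δ hδ ⟨hδ₀, hδe⟩
  have hδ₁ : δ < 1 := hδe.trans (exp_lt_one_iff.mpr (by norm_num))
  have hL : 0 < |log δ| := abs_pos.mpr (log_neg hδ₀ hδ₁).ne
  rw [← fundamentalFunction, fundamentalFunction_eq (by linarith) hβ hδ₀ hδ₁ hδ,
    div_self (mul_pos (by positivity) (rpow_pos_of_pos hL _)).ne']
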